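/- arXiv:0801.0353 — 2 statements merged into one kernel-verified Lean document; each statement's English description precedes it below -/
import Mathlib

section
/- A partial function F : {0,1}* → ℕ is of the form max f for some total recursive f : {0,1}* × ℕ → ℕ if and only if F is of the form p ↦ card(W_{g(p)}) for some total recursive g : {0,1}* → {0,1}*, where card(W) is defined only when W is finite. -/
/-- The max of a set of naturals, as a partial value: defined iff the set is
nonempty and bounded. -/
noncomputable def pmax (S : Set ℕ) : Part ℕ := ⟨S.Nonempty ∧ BddAbove S, fun _ => sSup S⟩

/-- The cardinality of a set of naturals, as a partial value: defined iff the set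
is finite. -/
noncomputable def pcard (S : Set ℕ) : Part ℕ := ⟨S.Finite, fun _ => S.ncard⟩

/-!
The maximum of `t ↦ f (p, t)` is the cardinality of the initial segment `{n | ∃ t, n < f (p, t)}`,
which is r.e. uniformly in `p`, so by the s-m-n theorem it is `W_{g p}` for a computable `g`.
Conversely, the cardinality of `W_c` is the maximum of the cardinalities of the finite stages
`{n | c halts on n within t steps}`: they increase with `t`, exhaust `W_c`, and have computable
size.
-/

open Nat.Partrec Nat.Partrec.Code

section PartialMaxAndCard

variable {ι : Type*} [Nonempty ι]

theorem pmax_range_eq_pcard_setOf_lt (u : ι → ℕ) :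
    pmax (Set.range u) = pcard {n | ∃ i, n < u i} := by
  by_cases hbdd : BddAbove (Set.range u)
  · have hIio : {n | ∃ i, n < u i} = Set.Iio (sSup (Set.range u)) := by
      ext n
      simp [lt_csSup_iff hbdd (Set.range_nonempty u)]
    rw [hIio]
    exact Part.ext' (iff_of_true ⟨Set.range_nonempty u, hbdd⟩ (Set.finite_Iio _))
      fun _ _ => (Set.ncard_Iio_nat _).symm
  · have huniv : {n | ∃ i, n < u i} = Set.univ := by
      refine Set.eq_univ_of_forall fun n => ?_
      obtain ⟨_, ⟨i, rfl⟩, hi⟩ := not_bddAbove_iff.1 hbdd n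
      exact ⟨i, hi⟩
    rw [huniv]
    exact Part.ext' (iff_of_false (fun h => hbdd h.2) Set.infinite_univ)
      fun h => absurd h.2 hbdd

theorem pcard_iUnion_eq_pmax_card {A : ι → Finset ℕ} (hA : Directed (· ⊆ ·) A) :
    pcard (⋃ i, (A i : Set ℕ)) = pmax (Set.range fun i => (A i).card) := by
  set S := ⋃ i, (A i : Set ℕ)
  have hcover : ∀ T : Finset ℕ, ↑T ⊆ S → ∃ i, T.card ≤ (A i).card := fun T hT =>
    have hA' : Directed (· ⊆ ·) fun i => (A i : Set ℕ) :=
      hA.mono_comp _ fun _ _ => Finset.coe_subset.2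
    (hA'.exists_mem_subset_of_finset_subset_biUnion hT).imp fun _ hi =>
      Finset.card_le_card (Finset.coe_subset.1 hi)
  have hbound : S.Finite → ∀ i, (A i).card ≤ S.ncard := fun hS i =>
    (Set.ncard_coe_finset (A i)).symm.trans_le
      (Set.ncard_le_ncard (Set.subset_iUnion (fun i => (A i : Set ℕ)) i) hS)
  refine Part.ext' ⟨fun hS => ⟨Set.range_nonempty _, S.ncard, ?_⟩, fun ⟨_, b, hb⟩ => ?_⟩ ?_
  · rintro _ ⟨i, rfl⟩
    exact hbound hS i
  · by_contra hinf
    obtain ⟨T, hTS, hT⟩ := Set.Infinite.exists_subset_card_eq hinf (b + 1)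
    obtain ⟨i, hi⟩ := hcover T hTS
    have : (A i).card ≤ b := hb ⟨i, rfl⟩
    omega
  · intro hS ⟨_, hbdd⟩
    change S.Finite at hS
    change S.ncard = sSup (Set.range fun i => (A i).card)
    refine le_antisymm ?_ (csSup_le (Set.range_nonempty _) ?_)
    · obtain ⟨i, hi⟩ := hcover hS.toFinset (by simp)
      rw [Set.ncard_eq_toFinset_card _ hS]
      exact hi.trans (le_csSup hbdd ⟨i, rfl⟩)
    · rintro _ ⟨i, rfl⟩
      exact hbound hS i

end PartialMaxAndCard

section SMN

variable {α : Type*} [Primcodable α]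

theorem exists_computable_eval_eq {h : α → ℕ →. ℕ} (hh : Partrec₂ h) :
    ∃ g : α → Code, Computable g ∧ ∀ a, (g a).eval = h a := by
  obtain ⟨c, hc⟩ := exists_code.1 hh
  refine ⟨fun a => curry c (Encodable.encode a),
    (primrec₂_curry.comp (Primrec.const c) Primrec.encode).to_comp, fun a => funext fun n => ?_⟩
  rw [eval_curry, hc]
  simp [Encodable.encodek, Part.map_id' Encodable.encode_nat]

theorem exists_computable_dom_eq_setOf_exists_lt {f : α × ℕ → ℕ} (hf : Computable f) :
    ∃ g : α → Code, Computable g ∧ ∀ a, (g a).eval.Dom = {n | ∃ t, n < f (a, t)} := by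
  let search : α → ℕ →. ℕ := fun a n => Nat.rfind fun t => Part.some (decide (n < f (a, t)))
  have hsearch : Partrec₂ search := Partrec.rfind <| Computable₂.partrec₂ <| Computable.to₂ <|
    Primrec.nat_lt.decide.to_comp.comp (Computable.snd.comp .fst)
      (hf.comp ((Computable.fst.comp .fst).pair .snd))
  obtain ⟨g, hg, hgeval⟩ := exists_computable_eval_eq hsearch
  refine ⟨g, hg, fun a => Set.ext fun n => ?_⟩
  rw [hgeval]
  exact Nat.rfind_dom.trans (by simp)

end SMN

/-- By `evaln_bound`, filtering `range t` loses no input on which `evaln t c` halts. -/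
def Nat.Partrec.Code.haltingStage (c : Code) (t : ℕ) : Finset ℕ :=
  (Finset.range t).filter fun n => (evaln t c n).isSome

theorem monotone_haltingStage (c : Code) : Monotone (haltingStage c) := by
  intro t t' htt' n
  simp only [haltingStage, Finset.mem_filter, Finset.mem_range, Option.isSome_iff_exists]
  exact fun ⟨hn, x, hx⟩ => ⟨hn.trans_le htt', x, evaln_mono htt' hx⟩

theorem iUnion_haltingStage (c : Code) : ⋃ t, (haltingStage c t : Set ℕ) = c.eval.Dom := by
  ext n
  simp only [Set.mem_iUnion, Finset.mem_coe, haltingStage, Finset.mem_filter, Finset.mem_range,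
    Option.isSome_iff_exists, ← Option.mem_def]
  refine ⟨fun ⟨t, _, x, hx⟩ => Part.dom_iff_mem.2 ⟨x, evaln_sound hx⟩, fun hn => ?_⟩
  obtain ⟨x, hx⟩ := Part.dom_iff_mem.1 hn
  obtain ⟨t, ht⟩ := evaln_complete.1 hx
  exact ⟨t, evaln_bound ht, x, ht⟩

theorem computable₂_card_haltingStage : Computable₂ fun c t => (haltingStage c t).card := by
  have hrel : PrimrecRel fun (n : ℕ) (x : Code × ℕ) => (evaln x.2 x.1 n).isSome :=
    ⟨inferInstance, (Primrec.option_isSome.comp (primrec_evaln.comp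
      (((Primrec.snd.comp .snd).pair (Primrec.fst.comp .snd)).pair .fst))).of_eq fun _ => by simp⟩
  have := (PrimrecRel.listFilter hrel).comp (Primrec.list_range.comp Primrec.snd) Primrec.id
  exact (Primrec.list_length.comp this).to_comp.of_eq fun _ => rfl

theorem stmt11 (F : List Bool →. ℕ) :
    (∃ f : List Bool × ℕ → ℕ, Computable f ∧
        ∀ p, F p = pmax (Set.range fun t => f (p, t))) ↔
    (∃ g : List Bool → Nat.Partrec.Code, Computable g ∧
        ∀ p, F p = pcard ((g p).eval.Dom)) := by
  constructor
  · rintro ⟨f, hf, hF⟩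
    obtain ⟨g, hg, hdom⟩ := exists_computable_dom_eq_setOf_exists_lt hf
    exact ⟨g, hg, fun p => by rw [hF, hdom, pmax_range_eq_pcard_setOf_lt]⟩
  · rintro ⟨g, hg, hF⟩
    refine ⟨fun x => (haltingStage (g x.1) x.2).card,
      computable₂_card_haltingStage.comp (hg.comp .fst) .snd, fun p => ?_⟩
    rw [hF, ← iUnion_haltingStage, pcard_iUnion_eq_pmax_card (monotone_haltingStage _).directed_le]
end

section
/- Let R ⊆ Fin(X→X) × X × X be a functional relation on an infinite set X and Φ_R the associated continuous functional. Then Φ_R equals the n-th iteration functional It^(n) if and only if: (a) for every finite partial function α and every x such that α^(n)(x) is defined, the triple (α restricted to {α^(i)(x) : 0 ≤ i < n}, x, α^(n)(x)) belongs to R; and (b) for every (α, x, y) ∈ R, α^(n)(x) is defined and equals y. -/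
/-- Iteration of a partial function: f^(0) = id, f^(n+1) = f^(n) ∘ f. -/
def pIter {X : Type*} (f : X →. X) : ℕ → (X →. X)
  | 0 => fun x => Part.some x
  | n + 1 => fun x => (f x).bind (pIter f n)

/-- `g` extends `f` (graph inclusion of partial functions). -/
def pext {X : Type*} (f g : X →. X) : Prop := ∀ x y, y ∈ f x → y ∈ g x

/-- Two partial functions are compatible: their union is still a partial function. -/
def PCompatible {X : Type*} (f g : X →. X) : Prop := ∃ h : X →. X, pext f h ∧ pext g h

/-- `R` is a functional relation. -/
def FunctionalRel {X : Type*} (R : (X →. X) → X → X → Prop) : Prop :=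
  ∀ α β x y y', PCompatible α β → R α x y → R β x y' → y = y'

/-- The restriction of a partial function to a set. -/
def restr {X : Type*} (f : X →. X) (s : Set X) : X →. X :=
  fun x => ⟨x ∈ s ∧ (f x).Dom, fun h => (f x).get h.2⟩

/-!
If `f^(n)(x) = y`, the restriction of `f` to the orbit segment `x, f x, …, f^(n-1) x` is finite
and still computes `y`, so (a) yields a witness; conversely (b) makes any witness `α ⊆ f` compute
`y`. For the forward implication, let `f` be `α` restricted to its orbit segment and `β ⊆ f` a
witness of `Φ_R(f)(x) = y`. Applying `Φ_R = It^(n)` to `β` itself gives `β^(n)(x) = y`, so `β` is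
defined along the whole orbit segment, i.e. on the domain of `f`, and therefore `β = f`.
-/

def pOrbit {X : Type*} (f : X →. X) (n : ℕ) (x : X) : Set X := {z | ∃ i < n, z ∈ pIter f i x}

section

variable {X : Type*} {f g h : X →. X} {s : Set X} {n : ℕ} {x y : X}

theorem pext_refl (f : X →. X) : pext f f := fun _ _ hy => hy

theorem pext_trans (hfg : pext f g) (hgh : pext g h) : pext f h :=
  fun x y hy => hgh x y (hfg x y hy)

theorem eq_of_pext_of_dom_subset (hfg : pext f g) (hdom : g.Dom ⊆ f.Dom) : f = g := by
  funext u
  refine Part.ext fun v => ⟨hfg u v, fun hv => ?_⟩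
  obtain ⟨w, hw⟩ := Part.dom_iff_mem.1 (hdom hv.fst)
  exact Part.mem_unique (hfg u w hw) hv ▸ hw

theorem mem_restr : y ∈ restr f s x ↔ x ∈ s ∧ y ∈ f x := by
  constructor
  · rintro ⟨⟨hs, hd⟩, rfl⟩
    exact ⟨hs, hd, rfl⟩
  · rintro ⟨hs, hd, rfl⟩
    exact ⟨⟨hs, hd⟩, rfl⟩

theorem restr_pext : pext (restr f s) f := fun _ _ hy => (mem_restr.1 hy).2

theorem pIter_add (a b : ℕ) (x : X) :
    pIter f (a + b) x = (pIter f a x).bind (pIter f b) := by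
  induction a generalizing x with
  | zero => rw [Nat.zero_add]; exact (Part.bind_some x _).symm
  | succ a ih =>
    rw [Nat.add_right_comm]
    exact (congrArg (f x).bind (funext ih)).trans (Part.bind_assoc (f x) _ _).symm

theorem mem_pIter_of_agree {i : ℕ} (hfg : ∀ u ∈ pOrbit f i x, ∀ v ∈ f u, v ∈ g u)
    (hy : y ∈ pIter f i x) : y ∈ pIter g i x := by
  induction i generalizing x with
  | zero => exact hy
  | succ i ih =>
    obtain ⟨v, hv, hy⟩ := Part.mem_bind_iff.1 hy
    refine Part.mem_bind_iff.2 ⟨v, hfg x ⟨0, i.succ_pos, Part.mem_some x⟩ v hv, ih ?_ hy⟩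
    rintro u ⟨k, hk, hu⟩
    exact hfg u ⟨k + 1, Nat.succ_lt_succ hk, Part.mem_bind_iff.2 ⟨v, hv, hu⟩⟩

theorem pIter_mono (hfg : pext f g) {i : ℕ} (hy : y ∈ pIter f i x) : y ∈ pIter g i x :=
  mem_pIter_of_agree (fun u _ => hfg u) hy

theorem mem_pIter_restr_pOrbit (hy : y ∈ pIter f n x) :
    y ∈ pIter (restr f (pOrbit f n x)) n x :=
  mem_pIter_of_agree (fun _ hu _ hv => mem_restr.2 ⟨hu, hv⟩) hy

theorem pOrbit_finite (f : X →. X) (n : ℕ) (x : X) : (pOrbit f n x).Finite := by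
  refine ((Finset.range n).finite_toSet.biUnion (t := fun i => {z | z ∈ pIter f i x}) fun i _ =>
    Set.Subsingleton.finite fun a ha b hb => Part.mem_unique ha hb).subset ?_
  rintro z ⟨i, hi, hz⟩
  exact Set.mem_biUnion (Finset.mem_range.2 hi) hz

theorem restr_pOrbit_dom_finite (f : X →. X) (n : ℕ) (x : X) :
    (restr f (pOrbit f n x)).Dom.Finite :=
  (pOrbit_finite f n x).subset fun _ hu => hu.1

theorem pIter_dom_of_lt (hy : y ∈ pIter f n x) {i : ℕ} (hi : i < n) :
    ∃ w ∈ pIter f i x, (f w).Dom := by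
  obtain ⟨m, rfl⟩ := Nat.exists_eq_add_of_lt hi
  rw [Nat.add_assoc, pIter_add] at hy
  obtain ⟨w, hw, hy⟩ := Part.mem_bind_iff.1 hy
  obtain ⟨v, hv, -⟩ := Part.mem_bind_iff.1 hy
  exact ⟨w, hw, hv.fst⟩

theorem pOrbit_subset_dom (hy : y ∈ pIter f n x) : pOrbit f n x ⊆ f.Dom := by
  rintro w ⟨i, hi, hw⟩
  obtain ⟨w', hw', hdom⟩ := pIter_dom_of_lt hy hi
  rwa [Part.mem_unique hw hw']

theorem pOrbit_subset_of_pext (hfg : pext f g) (hy : y ∈ pIter f n x) :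
    pOrbit g n x ⊆ pOrbit f n x := by
  rintro w ⟨i, hi, hw⟩
  obtain ⟨w', hw', -⟩ := pIter_dom_of_lt hy hi
  rw [Part.mem_unique hw (pIter_mono hfg hw')]
  exact ⟨i, hi, hw'⟩

theorem eq_restr_pOrbit_of_pext (hfg : pext f (restr g (pOrbit g n x)))
    (hy : y ∈ pIter f n x) : f = restr g (pOrbit g n x) :=
  eq_of_pext_of_dom_subset hfg fun _ hw =>
    pOrbit_subset_dom hy (pOrbit_subset_of_pext (pext_trans hfg restr_pext) hy hw.1)

end

theorem stmt15_general {X : Type*} (R : (X →. X) → X → X → Prop) (n : ℕ) :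
    (∀ f : X →. X, ∀ x y, (∃ α, pext α f ∧ R α x y) ↔ y ∈ pIter f n x) ↔
    ((∀ α : X →. X, α.Dom.Finite → ∀ x y, y ∈ pIter α n x →
        R (restr α {z | ∃ i < n, z ∈ pIter α i x}) x y) ∧
     (∀ α x y, R α x y → y ∈ pIter α n x)) := by
  constructor
  · intro H
    have hb : ∀ α x y, R α x y → y ∈ pIter α n x :=
      fun α x y hR => (H α x y).1 ⟨α, pext_refl α, hR⟩
    refine ⟨fun α _ x y hy => ?_, hb⟩
    obtain ⟨β, hβ, hR⟩ := (H _ x y).2 (mem_pIter_restr_pOrbit hy)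
    rw [eq_restr_pOrbit_of_pext hβ (hb β x y hR)] at hR
    exact hR
  · rintro ⟨ha, hb⟩ f x y
    refine ⟨fun ⟨β, hβ, hR⟩ => pIter_mono hβ (hb β x y hR), fun hy => ?_⟩
    exact ⟨_, pext_trans restr_pext restr_pext,
      ha _ (restr_pOrbit_dom_finite f n x) x y (mem_pIter_restr_pOrbit hy)⟩

theorem stmt15 {X : Type*} [Infinite X] (R : (X →. X) → X → X → Prop)
    (hdom : ∀ α x y, R α x y → α.Dom.Finite) (hfun : FunctionalRel R) (n : ℕ) :
    (∀ f : X →. X, ∀ x y, (∃ α, pext α f ∧ R α x y) ↔ y ∈ pIter f n x) ↔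
    ((∀ α : X →. X, α.Dom.Finite → ∀ x y, y ∈ pIter α n x →
        R (restr α {z | ∃ i < n, z ∈ pIter α i x}) x y) ∧
     (∀ α x y, R α x y → y ∈ pIter α n x)) :=
  stmt15_general R n
end
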